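/- The classical total variation distance of the Breidbart outcome distributions on k qubits equals the trace distance: (1/2) Σ_{r∈{0,1}^k} |P_r(ρ₀^k) − P_r(ρ₁^k)| = (√2/2)^k, where P_r(ρ_b^k) − P_r(ρ₁₋b^k) = 2(−1)^{w(r)}(√2/4)^k. Consequently D(ρ₀^k, ρ₁^k) ≥ (√2/2)^k. -/

import Mathlib

open Matrix Kronecker ComplexOrder

/-- `|M| = √(Mᴴ M)`, the positive-semidefinite absolute value of a matrix. -/
noncomputable def matAbs {n : Type*} [Fintype n] [DecidableEq n]
    (M : Matrix n n ℂ) : Matrix n n ℂ :=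
  (Matrix.posSemidef_conjTranspose_mul_self M).1.eigenvectorUnitary.1 *
    diagonal ((↑) ∘ (Real.sqrt ·) ∘ (Matrix.posSemidef_conjTranspose_mul_self M).1.eigenvalues) *
    (star (Matrix.posSemidef_conjTranspose_mul_self M).1.eigenvectorUnitary : Matrix n n ℂ)

/-- Trace distance `D(A,B) = (1/2) Tr |A - B|`. -/
noncomputable def traceDist {n : Type*} [Fintype n] [DecidableEq n]
    (A B : Matrix n n ℂ) : ℝ :=
  (1 / 2) * (Matrix.trace (matAbs (A - B))).re

/-- |+⟩⟨+| -/
noncomputable def projPlus : Matrix (Fin 2) (Fin 2) ℂ := !![1/2, 1/2; 1/2, 1/2]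

/-- |1⟩⟨1| -/
noncomputable def projOne : Matrix (Fin 2) (Fin 2) ℂ := !![0, 0; 0, 1]

/-- |φ₀⟩⟨φ₀| = |+⟩⟨+| and |φ₁⟩⟨φ₁| = |1⟩⟨1| -/
noncomputable def phiProj : Fin 2 → Matrix (Fin 2) (Fin 2) ℂ := ![projPlus, projOne]

/-- σ_b^k : equal mixture over Ω_b^k of ⊗_j |φ_{i_j}⟩⟨φ_{i_j}|. -/
noncomputable def sigmaMix (b : Fin 2) (k : ℕ) :
    Matrix (Fin k → Fin 2) (Fin k → Fin 2) ℂ :=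
  ((2 : ℂ) ^ (k - 1))⁻¹ •
    ∑ i ∈ Finset.univ.filter (fun i : Fin k → Fin 2 => ∑ j, i j = b),
      Matrix.of fun x y => ∏ j, phiProj (i j) (x j) (y j)

/-- the conjugate-coding states |r⟩_s : |0⟩₀=|0⟩, |1⟩₀=|1⟩, |0⟩₁=|+⟩, |1⟩₁=|−⟩. -/
noncomputable def cket (r s : Fin 2) : Fin 2 → ℂ :=
  if s = 0 then (if r = 0 then ![1, 0] else ![0, 1])
  else (if r = 0 then ![(Real.sqrt 2 / 2 : ℂ), (Real.sqrt 2 / 2 : ℂ)]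
        else ![(Real.sqrt 2 / 2 : ℂ), -(Real.sqrt 2 / 2 : ℂ)])

/-- |r⟩_s⟨r| -/
noncomputable def cProj (r s : Fin 2) : Matrix (Fin 2) (Fin 2) ℂ :=
  Matrix.vecMulVec (cket r s) (star (cket r s))

/-- ρ_b^k : equal mixture over keys s ∈ {0,1}^k and r ∈ Ω_b^k of ⊗_j |r_j⟩_{s_j}⟨r_j|. -/
noncomputable def rhoMix (b : Fin 2) (k : ℕ) :
    Matrix (Fin k → Fin 2) (Fin k → Fin 2) ℂ :=
  ((2 : ℂ) ^ (2 * k - 1))⁻¹ •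
    ∑ r ∈ Finset.univ.filter (fun r : Fin k → Fin 2 => ∑ j, r j = b),
      ∑ s : Fin k → Fin 2,
        Matrix.of fun x y => ∏ j, cProj (r j) (s j) (x j) (y j)

/-- the Hadamard matrix -/
noncomputable def Hmat : Matrix (Fin 2) (Fin 2) ℂ :=
  ((Real.sqrt 2 / 2 : ℝ) : ℂ) • !![1, 1; 1, -1]

/-- H⁰ = I and H¹ = H -/
noncomputable def Hpow : Fin 2 → Matrix (Fin 2) (Fin 2) ℂ := ![1, Hmat]

/-- H^{i₁} ⊗ ⋯ ⊗ H^{i_k} -/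
noncomputable def Hten {k : ℕ} (i : Fin k → Fin 2) :
    Matrix (Fin k → Fin 2) (Fin k → Fin 2) ℂ :=
  Matrix.of fun x y => ∏ j, Hpow (i j) (x j) (y j)

/-- Breidbart basis vectors: |β₀⟩ = cos(π/8)|0⟩ + sin(π/8)|1⟩,
    |β₁⟩ = −sin(π/8)|0⟩ + cos(π/8)|1⟩. -/
noncomputable def bket : Fin 2 → Fin 2 → ℂ :=
  ![![(Real.cos (Real.pi / 8) : ℂ), (Real.sin (Real.pi / 8) : ℂ)],
    ![(-Real.sin (Real.pi / 8) : ℂ), (Real.cos (Real.pi / 8) : ℂ)]]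

/-- ⊗_j |β_{r_j}⟩ -/
noncomputable def bvec {k : ℕ} (r : Fin k → Fin 2) : (Fin k → Fin 2) → ℂ :=
  fun x => ∏ j, bket (r j) (x j)

/-- probability of Breidbart outcome string r on the state ρ. -/
noncomputable def breidProb {k : ℕ} (r : Fin k → Fin 2)
    (ρ : Matrix (Fin k → Fin 2) (Fin k → Fin 2) ℂ) : ℝ :=
  (dotProduct (star (bvec r)) (ρ.mulVec (bvec r))).re

/-- Hamming weight -/
def hw {k : ℕ} (r : Fin k → Fin 2) : ℕ :=
  (Finset.univ.filter fun j => r j = 1).card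

/-!
Averaging the conjugate-coding states over the basis key and taking the parity-signed sum over
strings factorises qubit by qubit: since `∑ₜ (-1)ᵗ ∑ₛ |t⟩ₛ⟨t| = Z + X = √2 H`, one gets
`ρ₀ᵏ - ρ₁ᵏ = 2 (√2/4)ᵏ H^{⊗k}`. The Breidbart vectors are the `±1` eigenvectors of `H`, which gives
the outcome-wise differences `2 (-1)^{w(r)} (√2/4)ᵏ`; and as `H` is unitary,
`|ρ₀ᵏ - ρ₁ᵏ| = 2 (√2/4)ᵏ I`, so the trace distance is exactly `(√2/2)ᵏ`, the total variation
distance of the Breidbart outcomes.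
-/

namespace Matrix

variable {ι m R : Type*} [Fintype ι]

def piTensor [CommMonoid R] (A : ι → Matrix m m R) : Matrix (ι → m) (ι → m) R :=
  of fun x y => ∏ j, A j (x j) (y j)

def piVec [CommMonoid R] (u : ι → m → R) : (ι → m) → R :=
  fun x => ∏ j, u j (x j)

theorem star_piVec [CommMonoid R] [StarMul R] (u : ι → m → R) :
    star (piVec u) = piVec (star u) := by
  ext x
  simp [piVec, star_prod]

theorem conjTranspose_piTensor [CommMonoid R] [StarMul R] (A : ι → Matrix m m R) :
    (piTensor A)ᴴ = piTensor (fun j => (A j)ᴴ) := by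
  ext x y
  simp [piTensor, star_prod]

variable [CommSemiring R]

theorem piTensor_smul (c : ι → R) (A : ι → Matrix m m R) :
    piTensor (fun j => c j • A j) = (∏ j, c j) • piTensor A := by
  ext x y
  simp [piTensor, Finset.prod_mul_distrib]

theorem piTensor_one [DecidableEq m] : piTensor (fun _ : ι => (1 : Matrix m m R)) = 1 := by
  ext x y
  by_cases hxy : x = y
  · subst hxy
    simp [piTensor]
  · obtain ⟨j, hj⟩ := Function.ne_iff.1 hxy
    rw [one_apply_ne hxy]
    exact Finset.prod_eq_zero (Finset.mem_univ j) (Matrix.one_apply_ne hj)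

variable [DecidableEq ι]

theorem sum_piTensor {κ : Type*} [Fintype κ] (A : ι → κ → Matrix m m R) :
    ∑ s : ι → κ, piTensor (fun j => A j (s j)) = piTensor (fun j => ∑ t, A j t) := by
  ext x y
  simp [piTensor, sum_apply, Finset.prod_univ_sum]

variable [Fintype m]

theorem piTensor_mul (A B : ι → Matrix m m R) :
    piTensor A * piTensor B = piTensor (fun j => A j * B j) := by
  ext x y
  simp [piTensor, mul_apply, Finset.prod_univ_sum, Finset.prod_mul_distrib]

theorem piTensor_mulVec_piVec (A : ι → Matrix m m R) (u : ι → m → R) :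
    piTensor A *ᵥ piVec u = piVec (fun j => A j *ᵥ u j) := by
  ext x
  simp [piTensor, piVec, mulVec, dotProduct, Finset.prod_univ_sum, Finset.prod_mul_distrib]

theorem piVec_dotProduct_piVec (u v : ι → m → R) :
    piVec u ⬝ᵥ piVec v = ∏ j, u j ⬝ᵥ v j := by
  simp [piVec, dotProduct, Finset.prod_univ_sum, Finset.prod_mul_distrib]

end Matrix

theorem neg_one_pow_val_add {R : Type*} [Monoid R] [HasDistribNeg R] (a b : Fin 2) :
    (-1 : R) ^ ((a + b : Fin 2) : ℕ) = (-1) ^ (a : ℕ) * (-1) ^ (b : ℕ) := by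
  fin_cases a <;> fin_cases b <;> simp

theorem prod_neg_one_pow_val {ι R : Type*} [CommMonoid R] [HasDistribNeg R]
    (s : Finset ι) (r : ι → Fin 2) :
    ∏ j ∈ s, (-1 : R) ^ (r j : ℕ) = (-1) ^ ((∑ j ∈ s, r j : Fin 2) : ℕ) := by
  classical
  induction s using Finset.induction_on with
  | empty => simp
  | insert j s hj ih => rw [Finset.prod_insert hj, Finset.sum_insert hj, neg_one_pow_val_add, ih]

theorem sum_filter_eq_zero_sub_sum_filter_eq_one {α R M : Type*} [Fintype α] [Ring R]
    [AddCommGroup M] [Module R M] (g : α → Fin 2) (f : α → M) :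
    ∑ a ∈ Finset.univ.filter (fun a => g a = 0), f a
        - ∑ a ∈ Finset.univ.filter (fun a => g a = 1), f a
      = ∑ a, (-1 : R) ^ (g a : ℕ) • f a := by
  rw [Finset.sum_filter, Finset.sum_filter, ← Finset.sum_sub_distrib]
  refine Finset.sum_congr rfl fun a _ => ?_
  rcases Fin.exists_fin_two.mp ⟨g a, rfl⟩ with h | h <;> simp [h]

theorem neg_one_pow_hw {k : ℕ} (r : Fin k → Fin 2) :
    ∏ j, (-1 : ℝ) ^ (r j : ℕ) = (-1) ^ hw r := by
  have hval : ∀ t : Fin 2, (t : ℕ) = if t = 1 then 1 else 0 := by decide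
  rw [Finset.prod_pow_eq_pow_sum, hw, Finset.card_filter]
  simp only [← hval]

theorem ofReal_sqrt_two_mul_ofReal_sqrt_two :
    ((Real.sqrt 2 : ℝ) : ℂ) * ((Real.sqrt 2 : ℝ) : ℂ) = 2 := by
  rw [← Complex.ofReal_mul, Real.mul_self_sqrt zero_le_two]
  norm_num

theorem sum_neg_one_pow_smul_sum_cProj :
    ∑ t : Fin 2, (-1 : ℂ) ^ (t : ℕ) • ∑ s : Fin 2, cProj t s = (Real.sqrt 2 : ℂ) • Hmat := by
  ext u v
  fin_cases u <;> fin_cases v <;>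
    norm_num [Hmat, cProj, cket, vecMulVec, Fin.sum_univ_two, Complex.conj_ofReal, map_ofNat,
      div_mul_div_comm, mul_div_assoc', div_mul_eq_mul_div, ofReal_sqrt_two_mul_ofReal_sqrt_two]

theorem conjTranspose_Hmat_mul_Hmat : Hmatᴴ * Hmat = 1 := by
  ext u v
  fin_cases u <;> fin_cases v <;>
    norm_num [Hmat, mul_apply, Fin.sum_univ_two, Complex.conj_ofReal, map_ofNat,
      div_mul_div_comm, ofReal_sqrt_two_mul_ofReal_sqrt_two]

theorem cos_sq_sub_sin_sq_pi_div_eight :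
    Real.cos (Real.pi / 8) ^ 2 - Real.sin (Real.pi / 8) ^ 2 = Real.sqrt 2 / 2 := by
  rw [← Real.cos_two_mul', show 2 * (Real.pi / 8) = Real.pi / 4 by ring, Real.cos_pi_div_four]

theorem two_mul_sin_mul_cos_pi_div_eight :
    2 * Real.sin (Real.pi / 8) * Real.cos (Real.pi / 8) = Real.sqrt 2 / 2 := by
  rw [← Real.sin_two_mul, show 2 * (Real.pi / 8) = Real.pi / 4 by ring, Real.sin_pi_div_four]

theorem Hmat_mulVec_bket (t : Fin 2) : Hmat *ᵥ bket t = (-1 : ℂ) ^ (t : ℕ) • bket t := by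
  have h₁ : ((Real.cos (Real.pi / 8) : ℂ)) ^ 2 - (Real.sin (Real.pi / 8) : ℂ) ^ 2
      = (Real.sqrt 2 : ℂ) / 2 := by exact_mod_cast cos_sq_sub_sin_sq_pi_div_eight
  have h₂ : 2 * (Real.sin (Real.pi / 8) : ℂ) * (Real.cos (Real.pi / 8) : ℂ)
      = (Real.sqrt 2 : ℂ) / 2 := by exact_mod_cast two_mul_sin_mul_cos_pi_div_eight
  have h₃ : (Real.sin (Real.pi / 8) : ℂ) ^ 2 + (Real.cos (Real.pi / 8) : ℂ) ^ 2 = 1 := by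
    exact_mod_cast Real.sin_sq_add_cos_sq (Real.pi / 8)
  ext u
  fin_cases t <;> fin_cases u <;>
    simp [Hmat, bket, mulVec, dotProduct, Fin.sum_univ_two, -Complex.ofReal_cos,
      -Complex.ofReal_sin, -Real.cos_pi_div_eight, -Real.sin_pi_div_eight]
  · linear_combination -(Real.cos (Real.pi / 8) : ℂ) * h₁ - (Real.sin (Real.pi / 8) : ℂ) * h₂
      + (Real.cos (Real.pi / 8) : ℂ) * h₃
  · linear_combination (Real.sin (Real.pi / 8) : ℂ) * h₁ - (Real.cos (Real.pi / 8) : ℂ) * h₂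
      + (Real.sin (Real.pi / 8) : ℂ) * h₃
  · linear_combination (Real.sin (Real.pi / 8) : ℂ) * h₁ - (Real.cos (Real.pi / 8) : ℂ) * h₂
      + (Real.sin (Real.pi / 8) : ℂ) * h₃
  · linear_combination (Real.cos (Real.pi / 8) : ℂ) * h₁ + (Real.sin (Real.pi / 8) : ℂ) * h₂
      - (Real.cos (Real.pi / 8) : ℂ) * h₃

theorem star_bket_dotProduct_bket (t : Fin 2) : star (bket t) ⬝ᵥ bket t = 1 := by
  have h : (Real.sin (Real.pi / 8) : ℂ) ^ 2 + (Real.cos (Real.pi / 8) : ℂ) ^ 2 = 1 := by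
    exact_mod_cast Real.sin_sq_add_cos_sq (Real.pi / 8)
  fin_cases t <;>
    simp [bket, dotProduct, Fin.sum_univ_two, Complex.conj_ofReal, -Complex.ofReal_cos,
      -Complex.ofReal_sin, -Real.cos_pi_div_eight, -Real.sin_pi_div_eight] <;>
    linear_combination h

theorem star_bket_dotProduct_Hmat_mulVec_bket (t : Fin 2) :
    star (bket t) ⬝ᵥ (Hmat *ᵥ bket t) = (-1) ^ (t : ℕ) := by
  rw [Hmat_mulVec_bket, dotProduct_smul, star_bket_dotProduct_bket, smul_eq_mul, mul_one]

theorem rhoMix_eq_smul_sum_piTensor (b : Fin 2) (k : ℕ) :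
    rhoMix b k = ((2 : ℂ) ^ (2 * k - 1))⁻¹ •
      ∑ r ∈ Finset.univ.filter (fun r : Fin k → Fin 2 => ∑ j, r j = b),
        piTensor (fun j => ∑ t, cProj (r j) t) := by
  simp only [rhoMix, ← sum_piTensor]
  rfl

theorem inv_two_pow_two_mul_sub_one_mul_sqrt_two_pow {k : ℕ} (hk : 1 ≤ k) :
    ((2 : ℝ) ^ (2 * k - 1))⁻¹ * Real.sqrt 2 ^ k = 2 * (Real.sqrt 2 / 4) ^ k := by
  have h : (2 : ℝ) ^ (2 * k - 1) * 2 = 4 ^ k := by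
    rw [← pow_succ, Nat.sub_add_cancel (by omega), pow_mul]
    norm_num
  rw [div_pow, ← h]
  field_simp

theorem rhoMix_sub_rhoMix {k : ℕ} (hk : 1 ≤ k) :
    rhoMix 0 k - rhoMix 1 k
      = ((2 * (Real.sqrt 2 / 4) ^ k : ℝ) : ℂ) • piTensor (fun _ : Fin k => Hmat) := by
  rw [rhoMix_eq_smul_sum_piTensor, rhoMix_eq_smul_sum_piTensor, ← smul_sub,
    sum_filter_eq_zero_sub_sum_filter_eq_one (R := ℂ)]
  simp_rw [← prod_neg_one_pow_val, ← piTensor_smul]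
  rw [sum_piTensor (fun _ (t : Fin 2) => (-1 : ℂ) ^ (t : ℕ) • ∑ s, cProj t s),
    sum_neg_one_pow_smul_sum_cProj, piTensor_smul, smul_smul, Finset.prod_const,
    Finset.card_univ, Fintype.card_fin, ← inv_two_pow_two_mul_sub_one_mul_sqrt_two_pow hk]
  push_cast
  rfl

theorem Matrix.IsHermitian.eigenvalues_eq_of_eq_smul_one {n : Type*} [Fintype n] [DecidableEq n]
    {A : Matrix n n ℂ} (hA : A.IsHermitian) {c : ℝ} (h : A = (c : ℂ) • 1) (i : n) :
    hA.eigenvalues i = c := by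
  subst h
  have hdiag := congrFun (congrFun hA.conjStarAlgAut_star_eigenvectorUnitary i) i
  simp only [map_smul, map_one, smul_apply, one_apply_eq, diagonal_apply_eq,
    Function.comp_apply, smul_eq_mul, mul_one] at hdiag
  exact Complex.ofReal_injective hdiag.symm

theorem matAbs_eq_smul_one {n : Type*} [Fintype n] [DecidableEq n] {M : Matrix n n ℂ} {t : ℝ}
    (ht : 0 ≤ t) (h : Mᴴ * M = ((t ^ 2 : ℝ) : ℂ) • 1) : matAbs M = (t : ℂ) • 1 := by
  have hev := (posSemidef_conjTranspose_mul_self M).1.eigenvalues_eq_of_eq_smul_one h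
  have hdiag : diagonal ((↑) ∘ (Real.sqrt ·) ∘ (posSemidef_conjTranspose_mul_self M).1.eigenvalues)
      = (t : ℂ) • (1 : Matrix n n ℂ) := by
    rw [← diagonal_one, ← diagonal_smul]
    congr 1
    ext i
    simp [hev, Real.sqrt_sq ht]
  rw [matAbs, hdiag, Matrix.mul_smul, mul_one, Matrix.smul_mul,
    Unitary.mul_star_self_of_mem (posSemidef_conjTranspose_mul_self M).1.eigenvectorUnitary.2]

theorem two_pow_mul_sqrt_two_div_four_pow (k : ℕ) :
    (2 : ℝ) ^ k * (Real.sqrt 2 / 4) ^ k = (Real.sqrt 2 / 2) ^ k := by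
  rw [← mul_pow]
  ring_nf

theorem breidProb_rhoMix_sub {k : ℕ} (hk : 1 ≤ k) (r : Fin k → Fin 2) :
    breidProb r (rhoMix 0 k) - breidProb r (rhoMix 1 k)
      = 2 * (-1) ^ hw r * (Real.sqrt 2 / 4) ^ k := by
  have hform : star (bvec r) ⬝ᵥ ((rhoMix 0 k - rhoMix 1 k) *ᵥ bvec r)
      = ((2 * (Real.sqrt 2 / 4) ^ k * ∏ j, (-1 : ℝ) ^ (r j : ℕ) : ℝ) : ℂ) := by
    rw [rhoMix_sub_rhoMix hk, smul_mulVec, dotProduct_smul,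
      show bvec r = piVec (fun j => bket (r j)) from rfl, piTensor_mulVec_piVec, star_piVec,
      piVec_dotProduct_piVec]
    simp only [Pi.star_apply, star_bket_dotProduct_Hmat_mulVec_bket]
    push_cast
    rfl
  rw [breidProb, breidProb, ← Complex.sub_re, ← dotProduct_sub, ← sub_mulVec, hform,
    Complex.ofReal_re, neg_one_pow_hw]
  ring

theorem sum_abs_breidProb_rhoMix_sub {k : ℕ} (hk : 1 ≤ k) :
    (1 / 2) * ∑ r : Fin k → Fin 2, |breidProb r (rhoMix 0 k) - breidProb r (rhoMix 1 k)|
      = (Real.sqrt 2 / 2) ^ k := by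
  have habs : ∀ r : Fin k → Fin 2,
      |breidProb r (rhoMix 0 k) - breidProb r (rhoMix 1 k)| = 2 * (Real.sqrt 2 / 4) ^ k := by
    intro r
    rw [breidProb_rhoMix_sub hk, abs_mul, abs_mul, abs_pow, abs_neg, abs_one, one_pow, mul_one,
      abs_two, abs_of_nonneg (by positivity)]
  simp only [habs, Finset.sum_const, Finset.card_univ, Fintype.card_fun, Fintype.card_fin,
    nsmul_eq_mul, Nat.cast_pow, Nat.cast_ofNat]
  rw [← two_pow_mul_sqrt_two_div_four_pow]
  ring

theorem traceDist_rhoMix {k : ℕ} (hk : 1 ≤ k) :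
    traceDist (rhoMix 0 k) (rhoMix 1 k) = (Real.sqrt 2 / 2) ^ k := by
  have hsq : (rhoMix 0 k - rhoMix 1 k)ᴴ * (rhoMix 0 k - rhoMix 1 k)
      = (((2 * (Real.sqrt 2 / 4) ^ k) ^ 2 : ℝ) : ℂ) • 1 := by
    rw [rhoMix_sub_rhoMix hk, conjTranspose_smul, Matrix.smul_mul, Matrix.mul_smul, smul_smul,
      conjTranspose_piTensor, piTensor_mul, conjTranspose_Hmat_mul_Hmat, piTensor_one,
      Complex.star_def, Complex.conj_ofReal, ← Complex.ofReal_mul, sq]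
  rw [traceDist, matAbs_eq_smul_one (by positivity) hsq, trace_smul, trace_one, Fintype.card_fun,
    Fintype.card_fin, Fintype.card_fin, smul_eq_mul, ← Complex.ofReal_natCast,
    ← Complex.ofReal_mul, Complex.ofReal_re, ← two_pow_mul_sqrt_two_div_four_pow]
  push_cast
  ring

theorem breidbart_tv_and_lower_bound (k : ℕ) (hk : 1 ≤ k) :
    (1 / 2) * ∑ r : Fin k → Fin 2,
        |breidProb r (rhoMix 0 k) - breidProb r (rhoMix 1 k)| = (Real.sqrt 2 / 2) ^ k ∧
      (Real.sqrt 2 / 2) ^ k ≤ traceDist (rhoMix 0 k) (rhoMix 1 k) :=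
  ⟨sum_abs_breidProb_rhoMix_sub hk, (traceDist_rhoMix hk).ge⟩
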